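/- Let f_1,…,f_k : {0,1}^n → ℝ≥0 and let g : {0,1}^{kn} → ℝ≥0 (viewed as a function of k vectors x^1,…,x^k ∈ {0,1}^n) be log-supermodular. If g(x^1,…,x^k) ≤ ∏_{i=1}^k f_i(z^i(x^1,…,x^k)) for all x^1,…,x^k ∈ {0,1}^n, then ∑_{x^1,…,x^k ∈ {0,1}^n} g(x^1,…,x^k) ≤ ∏_{i=1}^k ( ∑_{x ∈ {0,1}^n} f_i(x) ). -/

import Mathlib

open scoped NNReal

/-- `zvec x i` is the vector whose `j`-th component is the `(i+1)`-st largest (1-indexed)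
among `x 0 j, …, x (k-1) j`; i.e. it is `true` iff at least `i+1` of these values are `true`. -/
def zvec {k n : ℕ} (x : Fin k → Fin n → Bool) (i : Fin k) : Fin n → Bool :=
  fun j => decide ((i : ℕ) + 1 ≤ (Finset.univ.filter (fun a : Fin k => x a j = true)).card)

/-!
Induction on `n`, splitting off the first coordinate of each of the `k` vectors. For fixed
remaining coordinates, the sum of `g` over the `k` first bits is at most
`∏ᵢ (fᵢ(1 zⁱ) + fᵢ(0 zⁱ))`: this is the case `n = 1`, for a log-supermodular function on `{0,1}ᵏ`
capped by `∏_{i < |v|} Aᵢ ∏_{i ≥ |v|} Bᵢ`. By the four functions theorem that sum is again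
log-supermodular in the remaining coordinates, so the induction hypothesis applies with
`y ↦ fᵢ(1y) + fᵢ(0y)` in place of `fᵢ`.

The case `n = 1` is a tensor power argument. Replacing two of `N` vectors `v₁, …, v_N` by their
meet and join does not decrease `∏ g(v_β)`, and exchanges of this kind turn the vectors into the
chain of their order statistics. After permuting the coordinates so that the coordinate counts
`c_j` decrease, the caps of that chain multiply to `∏_j A_{σ j}^{c_j} B_{σ j}^{N - c_j}`. Summing
over all `σ` and all tuples gives `(∑ g)^N ≤ k! (∏ (Aᵢ + Bᵢ))^N`, and `N → ∞` removes the `k!`.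
-/

open Finset

lemma List.countP_ofFn_apply {ι : Type*} {N : ℕ} (x : Fin N → ι → Bool) (j : ι) :
    (List.ofFn x).countP (· j) = #{β | x β j = true} := by
  induction N with
  | zero => simp
  | succ N ih =>
    rw [List.ofFn_succ, List.countP_cons, ih, card_filter, card_filter, Fin.sum_univ_succ,
      add_comm]

lemma Fintype.sum_fin_succ_pi {α M : Type*} [Fintype α] [AddCommMonoid M] {n : ℕ}
    (f : (Fin (n + 1) → α) → M) : ∑ y, f y = ∑ y : Fin n → α, ∑ b, f (Fin.cons b y) := by
  rw [← Fintype.sum_equiv (Fin.consEquiv fun _ ↦ α) _ f (fun _ ↦ rfl), Fintype.sum_prod_type,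
    sum_comm]
  rfl

lemma sum_prod_ite_eq_prod_add {ι R : Type*} [Fintype ι] [DecidableEq ι] [CommSemiring R]
    (a b : ι → R) : ∑ v : ι → Bool, ∏ i, (if v i then a i else b i) = ∏ i, (a i + b i) := by
  rw [← Fintype.prod_sum fun i (c : Bool) ↦ if c then a i else b i]
  simp

lemma prod_ite_eq_of_card_filter_eq {α β M : Type*} [CommMonoid M] {s : Finset α} {t : Finset β}
    {p : α → Prop} {q : β → Prop} [DecidablePred p] [DecidablePred q] (hst : #s = #t)
    (hpq : #(s.filter p) = #(t.filter q)) (a b : M) :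
    ∏ x ∈ s, (if p x then a else b) = ∏ y ∈ t, (if q y then a else b) := by
  have hs := card_filter_add_card_filter_not (s := s) p
  have ht := card_filter_add_card_filter_not (s := t) q
  simp only [prod_ite, prod_const]
  congr 2
  omega

lemma lt_card_filter_iff_of_antitone {k : ℕ} {d : Fin k → ℕ} (hd : Antitone d) (m : ℕ)
    (i : Fin k) : (i : ℕ) < #{i' | m < d i'} ↔ m < d i := by
  constructor
  · intro h
    by_contra hi
    have hsub : univ.filter (fun i' ↦ m < d i') ⊆ Iio i := fun i' hi' ↦ by
      simp only [mem_filter, mem_univ, true_and] at hi'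
      exact mem_Iio.2 (lt_of_not_ge fun hle ↦ hi (hi'.trans_le (hd hle)))
    simpa using h.trans_le (card_le_card hsub)
  · intro h
    have hsub : Iic i ⊆ univ.filter (fun i' ↦ m < d i') := fun i' hi' ↦ by
      simpa using h.trans_le (hd (mem_Iic.1 hi'))
    simpa [Nat.lt_succ_iff] using card_le_card hsub

lemma exists_perm_lt_card_filter_iff {k : ℕ} (c : Fin k → ℕ) :
    ∃ σ : Equiv.Perm (Fin k), ∀ m j, (σ j : ℕ) < #{j' | m < c j'} ↔ m < c j := by
  set τ := Tuple.sort (OrderDual.toDual ∘ c)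
  have hanti : Antitone (c ∘ τ) := Tuple.monotone_sort (OrderDual.toDual ∘ c)
  refine ⟨τ.symm, fun m j ↦ ?_⟩
  have hcard : #{j' | m < c j'} = #{i' | m < c (τ i')} :=
    card_equiv τ.symm (by simp)
  simpa [hcard] using lt_card_filter_iff_of_antitone hanti m (τ.symm j)

lemma NNReal.le_of_forall_pow_le_mul_pow {a b C : ℝ≥0} (h : ∀ N : ℕ, a ^ N ≤ C * b ^ N) :
    a ≤ b := by
  by_contra! hba
  obtain rfl | hb := eq_zero_or_pos b
  · simpa [hba.ne'] using h 1
  obtain ⟨N, hN⟩ := pow_unbounded_of_one_lt C ((one_lt_div hb).2 hba)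
  rw [div_pow, lt_div_iff₀ (pow_pos hb N)] at hN
  exact (h N).not_gt hN

def LogSupermodular {α : Type*} [Lattice α] (g : α → ℝ≥0) : Prop :=
  ∀ x y, g x * g y ≤ g (x ⊓ y) * g (x ⊔ y)

section Absorb

variable {α : Type*} [Lattice α]

/-- `u` is swept through the list, carrying the running join; `absorbMeets` records the meets it
leaves behind. -/
def absorbJoin (u : α) : List α → α
  | [] => u
  | x :: t => absorbJoin (u ⊔ x) t

def absorbMeets (u : α) : List α → List α
  | [] => []
  | x :: t => (u ⊓ x) :: absorbMeets (u ⊔ x) t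

@[simp]
lemma length_absorbMeets (u : α) (l : List α) : (absorbMeets u l).length = l.length := by
  induction l generalizing u <;> simp [absorbMeets, *]

lemma LogSupermodular.mul_prod_le_absorb {g : α → ℝ≥0} (hg : LogSupermodular g) (u : α)
    (l : List α) :
    g u * (l.map g).prod ≤ g (absorbJoin u l) * ((absorbMeets u l).map g).prod := by
  induction l generalizing u with
  | nil => simp [absorbJoin, absorbMeets]
  | cons x t ih =>
    calc g u * (g x * (t.map g).prod) = g u * g x * (t.map g).prod := by ring
      _ ≤ g (u ⊓ x) * g (u ⊔ x) * (t.map g).prod := mul_le_mul_left (hg u x) _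
      _ = g (u ⊓ x) * (g (u ⊔ x) * (t.map g).prod) := by ring
      _ ≤ g (u ⊓ x) * (g (absorbJoin (u ⊔ x) t) * ((absorbMeets (u ⊔ x) t).map g).prod) :=
        mul_le_mul_right (ih _) _
      _ = _ := by simp only [absorbJoin, absorbMeets, List.map_cons, List.prod_cons]; ring

end Absorb

section OrderStat

variable {ι : Type*}

def orderStat (l : List (ι → Bool)) (m : ℕ) : ι → Bool :=
  fun j => decide (m < l.countP (· j))

lemma countP_absorbJoin_cons_absorbMeets (u : ι → Bool) (l : List (ι → Bool)) (j : ι) :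
    (absorbJoin u l :: absorbMeets u l).countP (· j) = (u :: l).countP (· j) := by
  induction l generalizing u with
  | nil => rfl
  | cons x t ih =>
    have := ih (u ⊔ x)
    simp only [absorbJoin, absorbMeets, List.countP_cons, Pi.inf_apply, Pi.sup_apply] at this ⊢
    by_cases hu : u j = true <;> by_cases hx : x j = true <;> simp [hu, hx] at this ⊢ <;> omega

lemma absorbJoin_apply (u : ι → Bool) (l : List (ι → Bool)) (j : ι) :
    absorbJoin u l j = (u :: l).any (· j) := by
  induction l generalizing u with
  | nil => simp [absorbJoin]
  | cons x t ih => simp [absorbJoin, ih, Bool.or_assoc]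

lemma absorbJoin_eq_orderStat_zero (u : ι → Bool) (l : List (ι → Bool)) :
    absorbJoin u l = orderStat (u :: l) 0 := by
  funext j
  simp [orderStat, absorbJoin_apply, List.any_eq, List.countP_pos_iff]

lemma orderStat_absorbMeets (u : ι → Bool) (l : List (ι → Bool)) (m : ℕ) :
    orderStat (absorbMeets u l) m = orderStat (u :: l) (m + 1) := by
  funext j
  have hcount := countP_absorbJoin_cons_absorbMeets u l j
  nth_rewrite 1 [List.countP_cons] at hcount
  rw [absorbJoin_eq_orderStat_zero] at hcount
  unfold orderStat at hcount ⊢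
  generalize (u :: l).countP (· j) = c at hcount ⊢
  generalize (absorbMeets u l).countP (· j) = c' at hcount ⊢
  by_cases h : 0 < c <;> simp [h] at hcount ⊢ <;> omega

lemma LogSupermodular.prod_le_prod_orderStat {g : (ι → Bool) → ℝ≥0} (hg : LogSupermodular g)
    (l : List (ι → Bool)) : (l.map g).prod ≤ ∏ m ∈ range l.length, g (orderStat l m) := by
  induction h : l.length generalizing l with
  | zero => simp_all
  | succ N ih =>
    obtain _ | ⟨u, t⟩ := l
    · simp at h
    calc ((u :: t).map g).prod ≤ g (absorbJoin u t) * ((absorbMeets u t).map g).prod := by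
          simpa using hg.mul_prod_le_absorb u t
      _ ≤ g (absorbJoin u t) * ∏ m ∈ range N, g (orderStat (absorbMeets u t) m) :=
          mul_le_mul_right (ih _ (by simpa using h)) _
      _ = ∏ m ∈ range (N + 1), g (orderStat (u :: t) m) := by
          simp [prod_range_succ', orderStat_absorbMeets, absorbJoin_eq_orderStat_zero, mul_comm]

end OrderStat

section Core

open scoped Nat

variable {k : ℕ} {A B : Fin k → ℝ≥0} {g : (Fin k → Bool) → ℝ≥0}

lemma LogSupermodular.prod_le_sum_perm (hg : LogSupermodular g)
    (hcap : ∀ v, g v ≤ ∏ i : Fin k, if (i : ℕ) < #{j | v j = true} then A i else B i)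
    {N : ℕ} (x : Fin N → Fin k → Bool) :
    ∏ β, g (x β) ≤ ∑ σ : Equiv.Perm (Fin k), ∏ β, ∏ j, if x β j then A (σ j) else B (σ j) := by
  set c : Fin k → ℕ := fun j ↦ #{β | x β j = true}
  -- `σ` sorts the coordinates by decreasing count, so it maps the support of each order
  -- statistic onto an initial segment of `Fin k`, where the cap is read off.
  obtain ⟨σ, hσ⟩ := exists_perm_lt_card_filter_iff c
  have hZ : ∀ m, orderStat (List.ofFn x) m = fun j ↦ decide (m < c j) := fun m ↦ by
    funext j
    simp only [orderStat, List.countP_ofFn_apply, c]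
  have hc : ∀ j, #{m ∈ range N | m < c j} = #{β | x β j = true} := fun j ↦ by
    have hcN : c j ≤ N := (card_filter_le _ _).trans (by simp)
    rw [show {m ∈ range N | m < c j} = range (c j) by ext; simp; omega, card_range]
  calc ∏ β, g (x β) = ((List.ofFn x).map g).prod := by simp [List.prod_ofFn]
    _ ≤ ∏ m ∈ range N, g (orderStat (List.ofFn x) m) := by
      simpa using hg.prod_le_prod_orderStat (List.ofFn x)
    _ ≤ ∏ m ∈ range N, ∏ i : Fin k, if (i : ℕ) < #{j | orderStat (List.ofFn x) m j = true}
          then A i else B i := prod_le_prod' fun m _ ↦ hcap _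
    _ = ∏ m ∈ range N, ∏ j, if m < c j then A (σ j) else B (σ j) := by
      refine prod_congr rfl fun m _ ↦ ?_
      rw [← Equiv.prod_comp σ]
      simp [hZ, hσ]
    _ = ∏ j, ∏ m ∈ range N, if m < c j then A (σ j) else B (σ j) := prod_comm
    _ = ∏ j, ∏ β, if x β j then A (σ j) else B (σ j) :=
      prod_congr rfl fun j _ ↦ prod_ite_eq_of_card_filter_eq (by simp) (hc j) _ _
    _ = ∏ β, ∏ j, if x β j then A (σ j) else B (σ j) := prod_comm
    _ ≤ _ := single_le_sum (f := fun σ : Equiv.Perm (Fin k) ↦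
          ∏ β, ∏ j, if x β j then A (σ j) else B (σ j)) (fun _ _ ↦ zero_le) (mem_univ σ)

lemma LogSupermodular.sum_pow_le (hg : LogSupermodular g)
    (hcap : ∀ v, g v ≤ ∏ i : Fin k, if (i : ℕ) < #{j | v j = true} then A i else B i) (N : ℕ) :
    (∑ v, g v) ^ N ≤ k ! * (∏ i, (A i + B i)) ^ N :=
  calc (∑ v, g v) ^ N = ∑ x : Fin N → Fin k → Bool, ∏ β, g (x β) := Fintype.sum_pow _ _
    _ ≤ ∑ x : Fin N → Fin k → Bool, ∑ σ : Equiv.Perm (Fin k),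
          ∏ β, ∏ j, if x β j then A (σ j) else B (σ j) :=
      sum_le_sum fun x _ ↦ hg.prod_le_sum_perm hcap x
    _ = ∑ _σ : Equiv.Perm (Fin k), (∏ i, (A i + B i)) ^ N := by
      rw [sum_comm]
      refine sum_congr rfl fun σ _ ↦ ?_
      rw [← Fintype.sum_pow fun v : Fin k → Bool ↦ ∏ j, if v j then A (σ j) else B (σ j),
        sum_prod_ite_eq_prod_add, Equiv.prod_comp σ fun i ↦ A i + B i]
    _ = k ! * (∏ i, (A i + B i)) ^ N := by simp [Fintype.card_perm]

theorem LogSupermodular.sum_le_prod_add (hg : LogSupermodular g)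
    (hcap : ∀ v, g v ≤ ∏ i : Fin k, if (i : ℕ) < #{j | v j = true} then A i else B i) :
    ∑ v, g v ≤ ∏ i, (A i + B i) :=
  NNReal.le_of_forall_pow_le_mul_pow (hg.sum_pow_le hcap)

end Core

section ConsCoord

variable {k n : ℕ}

def consCoord (ε : Fin k → Bool) (x : Fin k → Fin n → Bool) : Fin k → Fin (n + 1) → Bool :=
  fun a ↦ Fin.cons (ε a) (x a)

lemma consCoord_inf_consCoord (ε δ : Fin k → Bool) (x y : Fin k → Fin n → Bool) :
    consCoord ε x ⊓ consCoord δ y = consCoord (ε ⊓ δ) (x ⊓ y) := by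
  funext a j
  cases j using Fin.cases <;> simp [consCoord]

lemma consCoord_sup_consCoord (ε δ : Fin k → Bool) (x y : Fin k → Fin n → Bool) :
    consCoord ε x ⊔ consCoord δ y = consCoord (ε ⊔ δ) (x ⊔ y) := by
  funext a j
  cases j using Fin.cases <;> simp [consCoord]

lemma zvec_consCoord (ε : Fin k → Bool) (x : Fin k → Fin n → Bool) (i : Fin k) :
    zvec (consCoord ε x) i = Fin.cons (decide ((i : ℕ) + 1 ≤ #{a | ε a = true})) (zvec x i) := by
  funext j
  cases j using Fin.cases <;> simp [zvec, consCoord]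

lemma sum_eq_sum_consCoord {M : Type*} [AddCommMonoid M]
    (h : (Fin k → Fin (n + 1) → Bool) → M) : ∑ x, h x = ∑ x, ∑ ε, h (consCoord ε x) := by
  let e : (Fin k → Bool) × (Fin k → Fin n → Bool) ≃ (Fin k → Fin (n + 1) → Bool) :=
    (Equiv.arrowProdEquivProdArrow _ _ _).symm.trans
      (Equiv.piCongrRight fun _ ↦ Fin.consEquiv fun _ ↦ Bool)
  rw [← Fintype.sum_equiv e _ h (fun _ ↦ rfl), Fintype.sum_prod_type, sum_comm]
  rfl

variable {g : (Fin k → Fin (n + 1) → Bool) → ℝ≥0}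

lemma LogSupermodular.sum_consCoord (hg : LogSupermodular g) :
    LogSupermodular fun x ↦ ∑ ε, g (consCoord ε x) := fun x y ↦
  four_functions_theorem_univ _ _ _ _ (fun _ ↦ zero_le) (fun _ ↦ zero_le) (fun _ ↦ zero_le)
    (fun _ ↦ zero_le) fun ε δ ↦ by
      simpa [consCoord_inf_consCoord, consCoord_sup_consCoord] using
        hg (consCoord ε x) (consCoord δ y)

lemma LogSupermodular.sum_consCoord_le (hg : LogSupermodular g)
    {f : Fin k → (Fin (n + 1) → Bool) → ℝ≥0} (hgf : ∀ x, g x ≤ ∏ i, f i (zvec x i))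
    (x : Fin k → Fin n → Bool) :
    ∑ ε, g (consCoord ε x) ≤
      ∏ i, (f i (Fin.cons true (zvec x i)) + f i (Fin.cons false (zvec x i))) := by
  refine LogSupermodular.sum_le_prod_add (fun ε δ ↦ ?_) fun ε ↦ (hgf _).trans_eq ?_
  · simpa [consCoord_inf_consCoord, consCoord_sup_consCoord] using
      hg (consCoord ε x) (consCoord δ x)
  · refine prod_congr rfl fun i _ ↦ ?_
    rw [zvec_consCoord]
    split_ifs with h <;> simp [h]

end ConsCoord

/-- Theorem 8 of the paper (the variant of the "2k functions" theorem): if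
`g : {0,1}^{kn} → ℝ≥0` is log-supermodular (identifying `{0,1}^{kn}` with `k`-tuples of
vectors in `{0,1}ⁿ`, with the componentwise lattice structure) and
`g(x¹,…,xᵏ) ≤ ∏ᵢ fᵢ(zⁱ(x¹,…,xᵏ))` for all `x¹,…,xᵏ ∈ {0,1}ⁿ`, then
`∑_{x¹,…,xᵏ} g(x¹,…,xᵏ) ≤ ∏ᵢ ∑_{x ∈ {0,1}ⁿ} fᵢ(x)`. -/
theorem sum_le_prod_of_logSupermodular {n k : ℕ}
    (f : Fin k → (Fin n → Bool) → ℝ≥0) (g : (Fin k → Fin n → Bool) → ℝ≥0)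
    (hg : ∀ x y : Fin k → Fin n → Bool, g x * g y ≤ g (x ⊓ y) * g (x ⊔ y))
    (hgf : ∀ x : Fin k → Fin n → Bool, g x ≤ ∏ i : Fin k, f i (zvec x i)) :
    ∑ x : Fin k → Fin n → Bool, g x ≤ ∏ i : Fin k, ∑ y : Fin n → Bool, f i y := by
  induction n with
  | zero => simpa [Fintype.sum_unique, Unique.eq_default] using hgf default
  | succ n ih =>
    calc ∑ x, g x = ∑ x, ∑ ε, g (consCoord ε x) := sum_eq_sum_consCoord g
      _ ≤ ∏ i, ∑ y, (f i (Fin.cons true y) + f i (Fin.cons false y)) :=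
        ih _ _ (LogSupermodular.sum_consCoord hg) (LogSupermodular.sum_consCoord_le hg hgf)
      _ = ∏ i, ∑ y, f i y := by simp_rw [Fintype.sum_fin_succ_pi, Fintype.sum_bool]
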